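/- The additive monoid BZ₃ is generated by the eight elements P₁₃, P₂₁, P₃₂, S, T, P₁₂, P₂₃, P₃₁; that is, every BZ triangle is a finite sum (with nonnegative integer multiplicities) of these eight elements. -/

import Mathlib

/-- The hexagon relations on a point of `ℤ⁹` with coordinates
`(a₁,b₁,c₁,a₂,a₃,b₂,b₃,c₂,c₃)` (indices `0,…,8`). -/
def hex (x : Fin 9 → ℤ) : Prop :=
  x 3 + x 4 = x 6 + x 7 ∧ x 5 + x 6 = x 8 + x 3 ∧ x 7 + x 8 = x 4 + x 5

/-- A BZ triangle: a point of `ℕ⁹` (all entries nonnegative) satisfying the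
hexagon relations. -/
def isBZ (x : Fin 9 → ℤ) : Prop := (∀ i, 0 ≤ x i) ∧ hex x

/-- The eight generators `P₁₃, P₂₁, P₃₂, S, T, P₁₂, P₂₃, P₃₁` of the monoid `BZ₃`
(coordinates ordered `(a₁,b₁,c₁,a₂,a₃,b₂,b₃,c₂,c₃)`):
`P₁₃ = e_{a₁}`, `P₂₁ = e_{b₁}`, `P₃₂ = e_{c₁}`, `S = e_{a₂}+e_{b₂}+e_{c₂}`,
`T = e_{a₃}+e_{b₃}+e_{c₃}`, `P₁₂ = e_{a₂}+e_{b₃}`, `P₂₃ = e_{b₂}+e_{c₃}`,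
`P₃₁ = e_{c₂}+e_{a₃}`. -/
def bzGens : Fin 8 → Fin 9 → ℤ :=
  ![![1, 0, 0, 0, 0, 0, 0, 0, 0],  -- P₁₃
    ![0, 1, 0, 0, 0, 0, 0, 0, 0],  -- P₂₁
    ![0, 0, 1, 0, 0, 0, 0, 0, 0],  -- P₃₂
    ![0, 0, 0, 1, 0, 1, 0, 1, 0],  -- S
    ![0, 0, 0, 0, 1, 0, 1, 0, 1],  -- T
    ![0, 0, 0, 1, 0, 0, 1, 0, 0],  -- P₁₂
    ![0, 0, 0, 0, 0, 1, 0, 0, 1],  -- P₂₃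
    ![0, 0, 0, 0, 1, 0, 0, 1, 0]]  -- P₃₁

/-!
The hexagon relations say exactly that `a₂ - b₃ = b₂ - c₃ = c₂ - a₃ =: d`, so `(a₂, b₂, c₂)` is
`(b₃, c₃, a₃)` shifted by `d`. Take `S` with multiplicity `s = min (a₂, b₂, c₂)` and `T` with
multiplicity `t = min (b₃, c₃, a₃) = s - d`; the remainders `a₂ - s = b₃ - t`, `b₂ - s = c₃ - t`,
`c₂ - s = a₃ - t` are nonnegative and are the multiplicities of `P₁₂, P₂₃, P₃₁`.
-/

theorem sum_smul_bzGens (n : Fin 8 → ℤ) :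
    ∑ i, n i • bzGens i =
      ![n 0, n 1, n 2, n 3 + n 5, n 4 + n 7, n 3 + n 6, n 4 + n 5, n 3 + n 7, n 4 + n 6] := by
  ext j
  fin_cases j <;> simp [bzGens, Fin.sum_univ_succ]

theorem hex.min_sub_min {x : Fin 9 → ℤ} (h : hex x) :
    min (x 3) (min (x 5) (x 7)) - min (x 6) (min (x 8) (x 4)) = x 3 - x 6 := by
  obtain ⟨h₁, h₂, h₃⟩ := h
  have shift : min (x 3) (min (x 5) (x 7)) =
      min (x 6 + (x 3 - x 6)) (min (x 8 + (x 3 - x 6)) (x 4 + (x 3 - x 6))) := by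
    congr 2 <;> omega
  rw [shift, min_add_add_right, min_add_add_right, add_sub_cancel_left]

def bzMultiplicities (x : Fin 9 → ℤ) : Fin 8 → ℤ :=
  let s := min (x 3) (min (x 5) (x 7))
  let t := min (x 6) (min (x 8) (x 4))
  ![x 0, x 1, x 2, s, t, x 3 - s, x 5 - s, x 7 - s]

theorem hex.sum_smul_bzMultiplicities {x : Fin 9 → ℤ} (h : hex x) :
    ∑ i, bzMultiplicities x i • bzGens i = x := by
  have shift := h.min_sub_min
  obtain ⟨h₁, h₂, h₃⟩ := h
  rw [sum_smul_bzGens]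
  ext j
  fin_cases j <;>
    simp only [bzMultiplicities, Fin.isValue, Fin.zero_eta, Fin.mk_one, Fin.reduceFinMk,
      Matrix.cons_val_zero, Matrix.cons_val_one, Matrix.cons_val, add_sub_cancel] <;>
    omega

theorem isBZ.bzMultiplicities_nonneg {x : Fin 9 → ℤ} (h : isBZ x) (i : Fin 8) :
    0 ≤ bzMultiplicities x i := by
  have entries_nonneg := h.1
  fin_cases i <;> simp [bzMultiplicities, entries_nonneg]

theorem stmt_4 (Q : Fin 9 → ℤ) (hQ : isBZ Q) :
    ∃ n : Fin 8 → ℕ, Q = ∑ i : Fin 8, (n i : ℤ) • bzGens i := by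
  refine ⟨fun i => (bzMultiplicities Q i).toNat, ?_⟩
  simp only [Int.toNat_of_nonneg (hQ.bzMultiplicities_nonneg _)]
  exact hQ.2.sum_smul_bzMultiplicities.symm
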